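/- A stationary finitely dependent coloring of ℤ cannot be a Markov chain: for every q ≥ 1 and every k ∈ ℕ, there is no probability measure μ on ℤ → Fin q that is simultaneously stationary, a q-coloring, k-dependent, and Markov. -/

import Mathlib

open MeasureTheory ProbabilityTheory

/-- Configurations: colorings of `ℤ` with `q` colors, with the product σ-algebra. -/
abbrev Config (q : ℕ) : Type := ℤ → Fin q

/-- The left shift on configurations: `shift x n = x (n + 1)`. -/
def shift {q : ℕ} (x : Config q) : Config q := fun n => x (n + 1)

/-- A measure on configurations is stationary if it is invariant under the shift. -/
def IsStationaryConfig {q : ℕ} (μ : Measure (Config q)) : Prop :=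
  μ.map shift = μ

/-- A measure on configurations is a (proper) `q`-coloring if almost surely adjacent
coordinates take different values. -/
def IsColoring {q : ℕ} (μ : Measure (Config q)) : Prop :=
  ∀ᵐ x ∂μ, ∀ n : ℤ, x n ≠ x (n + 1)

/-- The σ-algebra on configurations generated by the coordinates in `A ⊆ ℤ`. -/
def coordSigma (q : ℕ) (A : Set ℤ) : MeasurableSpace (Config q) :=
  ⨆ a ∈ A, MeasurableSpace.comap (fun x : Config q => x a) inferInstance

/-- A measure on configurations is `k`-dependent if the σ-algebras generated by the
coordinates in any two sets `A, B ⊆ ℤ` with `|a - b| > k` for all `a ∈ A`, `b ∈ B`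
are independent. -/
def KDependent {q : ℕ} (k : ℕ) (μ : Measure (Config q)) : Prop :=
  ∀ A B : Set ℤ, (∀ a ∈ A, ∀ b ∈ B, (k : ℤ) < |a - b|) →
    Indep (coordSigma q A) (coordSigma q B) μ

/-- The σ-algebra generated by a set of coordinates is a sub-σ-algebra of the product
σ-algebra. -/
lemma coordSigma_le (q : ℕ) (A : Set ℤ) :
    coordSigma q A ≤ (inferInstance : MeasurableSpace (Config q)) :=
  iSup₂_le fun a _ => (measurable_pi_apply a).comap_le

/-- A measure on configurations is Markov if for every `n` the σ-algebras generated by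
the coordinates in `{m | m ≤ n}` and in `{m | n ≤ m}` are conditionally independent
given the σ-algebra generated by the coordinate `n`. -/
def IsMarkov (q : ℕ) (μ : Measure (Config q)) [IsFiniteMeasure μ] : Prop :=
  ∀ n : ℤ, CondIndep (coordSigma q {n})
    (coordSigma q {m | m ≤ n}) (coordSigma q {m | n ≤ m})
    (coordSigma_le q {n}) μ

/-! Let `π` be the one-site law and `Pₙ(a, b) = μ(x₀ = a, xₙ = b) / π(a)` the `n`-step transition
matrix. Stationarity and the Markov property give the Chapman–Kolmogorov equations `Pₙ = P₁ ^ n`,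
while `k`-dependence makes `Pₙ(a, b) = π(b)` on the support of `π` for `n > k`. Hence
`P₁ ^ (k + 2) = P₁ ^ (k + 1)` and `trace (P₁ ^ (k + 1)) = ∑ π = 1`. For such a matrix
`P₁ - P₁ ^ (k + 1)` is nilpotent, so `trace P₁ = 1`, whereas the coloring property makes the
diagonal of `P₁` vanish. -/

theorem Matrix.trace_eq_trace_pow_of_pow_succ_eq {ι R : Type*} [Fintype ι] [DecidableEq ι]
    [CommRing R] [IsReduced R] {P : Matrix ι ι R} {n : ℕ}
    (h : P ^ (n + 1) = P ^ n) : P.trace = (P ^ n).trace := by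
  -- `E` is an idempotent absorbing `P` on both sides, so `(P - E) ^ (j + 1) = P ^ (j + 1) - E`.
  set E := P ^ n
  have hstable : ∀ j, P ^ (n + j) = E := by
    intro j
    induction j with
    | zero => rfl
    | succ j ih => rw [← add_assoc, pow_succ, ih, ← pow_succ, h]
  have hPE : ∀ j, P ^ j * E = E := fun j => by rw [← pow_add, add_comm, hstable]
  have hEP : E * P = E := by rw [← pow_succ, h]
  have hsub : ∀ j, (P - E) ^ (j + 1) = P ^ (j + 1) - E := by
    intro j
    induction j with
    | zero => simp
    | succ j ih =>
      rw [pow_succ, ih, sub_mul, mul_sub, mul_sub, ← pow_succ, hPE, hEP, ← pow_add, hstable]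
      abel
  have hnil : IsNilpotent (P - E) := ⟨n + 1, by rw [hsub, h, sub_self]⟩
  have := (Matrix.isNilpotent_trace_of_isNilpotent hnil).eq_zero
  rwa [Matrix.trace_sub, sub_eq_zero] at this

section

variable {Ω β : Type*} {mΩ : MeasurableSpace Ω} [MeasurableSpace β] [MeasurableSingletonClass β]
  {μ : Measure Ω} {X : Ω → β}

theorem setIntegral_preimage_singleton_of_stronglyMeasurable_comap {f : Ω → ℝ}
    (hX : Measurable X) (hf : StronglyMeasurable[MeasurableSpace.comap X ‹_›] f) {x : Ω} :
    ∫ y in X ⁻¹' {X x}, f y ∂μ = μ.real (X ⁻¹' {X x}) * f x := by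
  rw [setIntegral_congr_fun (hX (measurableSet_singleton _)) fun y hy => hf.factorsThrough hy,
    setIntegral_const, smul_eq_mul]

theorem measureReal_inter_eq_setIntegral_condExp [IsFiniteMeasure μ] {m : MeasurableSpace Ω}
    (hm : m ≤ mΩ) {s A : Set Ω} (hs : MeasurableSet[mΩ] s) (hA : MeasurableSet[m] A) :
    μ.real (s ∩ A) = ∫ y in A, (μ⟦s | m⟧) y ∂μ := by
  rw [setIntegral_condExp hm ((integrable_const (1 : ℝ)).indicator hs) hA,
    setIntegral_indicator hs, Set.inter_comm]
  simp

theorem ProbabilityTheory.CondIndep.measureReal_inter_preimage_singleton [StandardBorelSpace Ω]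
    [IsFiniteMeasure μ] (hX : Measurable X) {m₁ m₂ : MeasurableSpace Ω}
    (hm₁ : m₁ ≤ mΩ) (hm₂ : m₂ ≤ mΩ)
    (h : CondIndep (MeasurableSpace.comap X ‹_›) m₁ m₂ hX.comap_le μ)
    {s t : Set Ω} (hs : MeasurableSet[m₁] s) (ht : MeasurableSet[m₂] t) (b : β) :
    μ.real (s ∩ t ∩ X ⁻¹' {b}) * μ.real (X ⁻¹' {b})
      = μ.real (s ∩ X ⁻¹' {b}) * μ.real (t ∩ X ⁻¹' {b}) := by
  rcases em (b ∈ Set.range X) with ⟨x, rfl⟩ | hb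
  · have hprod := (condIndep_iff _ _ _ _ hm₁ hm₂ μ).1 h s t hs ht
    have hA : MeasurableSet[MeasurableSpace.comap X ‹_›] (X ⁻¹' {X x}) :=
      ⟨{X x}, measurableSet_singleton _, rfl⟩
    have hs' := hm₁ s hs
    have ht' := hm₂ t ht
    rw [measureReal_inter_eq_setIntegral_condExp hX.comap_le (hs'.inter ht') hA,
      setIntegral_congr_ae (hX.comap_le _ hA) (hprod.mono fun y hy _ => hy),
      measureReal_inter_eq_setIntegral_condExp hX.comap_le hs' hA,
      measureReal_inter_eq_setIntegral_condExp hX.comap_le ht' hA,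
      setIntegral_preimage_singleton_of_stronglyMeasurable_comap hX
        (stronglyMeasurable_condExp.mul stronglyMeasurable_condExp),
      setIntegral_preimage_singleton_of_stronglyMeasurable_comap hX stronglyMeasurable_condExp,
      setIntegral_preimage_singleton_of_stronglyMeasurable_comap hX stronglyMeasurable_condExp,
      Pi.mul_apply]
    ring
  · simp [Set.preimage_singleton_eq_empty.2 hb]

end

section Config

variable {q : ℕ}

lemma measurable_shift : Measurable (shift : Config q → Config q) :=
  measurable_pi_lambda _ fun n => measurable_pi_apply (n + 1)

lemma shift_iterate_apply (j : ℕ) (x : Config q) (n : ℤ) : shift^[j] x n = x (n + j) := by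
  induction j generalizing x with
  | zero => simp
  | succ j ih =>
    rw [Function.iterate_succ_apply, ih, shift]
    push_cast
    ring_nf

lemma measurableSet_coordSigma {A : Set ℤ} {n : ℤ} (hn : n ∈ A) (a : Fin q) :
    MeasurableSet[coordSigma q A] {x | x n = a} :=
  le_iSup₂ (f := fun i (_ : i ∈ A) => MeasurableSpace.comap (fun x : Config q => x i) _) n hn _
    ⟨{a}, measurableSet_singleton a, rfl⟩

lemma measurableSet_coord (n : ℤ) (a : Fin q) : MeasurableSet {x : Config q | x n = a} :=
  measurableSet_eq_fun (measurable_pi_apply n) measurable_const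

lemma measurableSet_coord_pair (m n : ℤ) (a b : Fin q) :
    MeasurableSet {x : Config q | x m = a ∧ x n = b} :=
  (measurableSet_coord m a).inter (measurableSet_coord n b)

lemma coordSigma_singleton (n : ℤ) :
    coordSigma q {n} = MeasurableSpace.comap (fun x : Config q => x n) inferInstance := by
  simp [coordSigma]

lemma measureReal_eq_sum_inter_coord (μ : Measure (Config q)) [IsFiniteMeasure μ]
    {s : Set (Config q)} (hs : MeasurableSet s) (n : ℤ) :
    μ.real s = ∑ c, μ.real (s ∩ {x | x n = c}) := by
  have := sum_measureReal_preimage_singleton (μ := μ.restrict s) Finset.univ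
    (f := fun x : Config q => x n) fun c _ => measurable_pi_apply n (measurableSet_singleton c)
  simp only [measureReal_restrict_apply' hs, Finset.coe_univ, Set.preimage_univ,
    Set.univ_inter] at this
  rw [← this]
  exact Finset.sum_congr rfl fun c _ => by rw [Set.inter_comm]; rfl

variable {μ : Measure (Config q)}

lemma IsStationaryConfig.measureReal_shift_iterate_preimage (hstat : IsStationaryConfig μ)
    (j : ℕ) {E : Set (Config q)} (hE : MeasurableSet E) : μ.real (shift^[j] ⁻¹' E) = μ.real E :=
  congrArg ENNReal.toReal
    ((MeasurePreserving.iterate ⟨measurable_shift, hstat⟩ j).measure_preimage hE.nullMeasurableSet)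

noncomputable def siteLaw (μ : Measure (Config q)) (a : Fin q) : ℝ := μ.real {x | x 0 = a}

noncomputable def pairLaw (μ : Measure (Config q)) (n : ℕ) (a b : Fin q) : ℝ :=
  μ.real {x | x 0 = a ∧ x n = b}

/-- Rows of colors `a` with `siteLaw μ a = 0` vanish, as `x / 0 = 0`; nothing below depends on
them. -/
noncomputable def transitionMatrix (μ : Measure (Config q)) (n : ℕ) : Matrix (Fin q) (Fin q) ℝ :=
  Matrix.of fun a b => pairLaw μ n a b / siteLaw μ a

lemma IsStationaryConfig.measureReal_coord (hstat : IsStationaryConfig μ) (n : ℕ) (a : Fin q) :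
    μ.real {x | x n = a} = siteLaw μ a := by
  rw [siteLaw, ← hstat.measureReal_shift_iterate_preimage n (measurableSet_coord 0 a)]
  congr 1
  ext x
  simp [shift_iterate_apply]

lemma IsStationaryConfig.measureReal_coord_pair (hstat : IsStationaryConfig μ) (n j : ℕ)
    (a b : Fin q) : μ.real {x | x n = a ∧ x (n + j : ℕ) = b} = pairLaw μ j a b := by
  rw [pairLaw, ← hstat.measureReal_shift_iterate_preimage n (measurableSet_coord_pair 0 j a b)]
  congr 1
  ext x
  simp [shift_iterate_apply, add_comm]

lemma sum_siteLaw [IsProbabilityMeasure μ] : ∑ a, siteLaw μ a = 1 := by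
  simpa [siteLaw] using (measureReal_eq_sum_inter_coord μ MeasurableSet.univ 0).symm

lemma IsColoring.pairLaw_one_self (hcol : IsColoring μ) (a : Fin q) : pairLaw μ 1 a a = 0 := by
  have hnull : μ {x | x 0 = a ∧ x (1 : ℕ) = a} = 0 := by
    refine measure_mono_null ?_ (ae_iff.1 hcol)
    rintro x ⟨h0, h1⟩ hx
    exact hx 0 (h0.trans h1.symm)
  rw [pairLaw, measureReal_def, hnull, ENNReal.toReal_zero]

lemma KDependent.pairLaw_eq_mul {k : ℕ} (hstat : IsStationaryConfig μ) (hdep : KDependent k μ)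
    {n : ℕ} (hkn : k < n) (a b : Fin q) : pairLaw μ n a b = siteLaw μ a * siteLaw μ b := by
  have hindep := hdep {0} {(n : ℤ)} fun i hi j hj => by
    rw [hi, hj, zero_sub, abs_neg, Nat.abs_cast]
    exact_mod_cast hkn
  rw [← hstat.measureReal_coord n b, siteLaw, pairLaw]
  simp only [measureReal_def, ← ENNReal.toReal_mul]
  exact congrArg ENNReal.toReal <| (Indep_iff _ _ μ).1 hindep {x | x 0 = a} {x | x n = b}
    (measurableSet_coordSigma (Set.mem_singleton _) a)
    (measurableSet_coordSigma (Set.mem_singleton _) b)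

lemma IsMarkov.measureReal_inter_coord_mul_siteLaw [IsFiniteMeasure μ]
    (hstat : IsStationaryConfig μ) (hmarkov : IsMarkov q μ) (n : ℕ) (a b c : Fin q) :
    μ.real ({x | x 0 = a ∧ x (n + 1 : ℕ) = b} ∩ {x | x n = c}) * siteLaw μ c
      = pairLaw μ n a c * pairLaw μ 1 c b := by
  have hcond : CondIndep (MeasurableSpace.comap (fun x : Config q => x n) inferInstance)
      (coordSigma q {m | m ≤ n}) (coordSigma q {m | n ≤ m})
      (measurable_pi_apply _).comap_le μ := by
    simpa only [coordSigma_singleton] using hmarkov n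
  have h := hcond.measureReal_inter_preimage_singleton (measurable_pi_apply _)
    (coordSigma_le q _) (coordSigma_le q _)
    (measurableSet_coordSigma (A := {m | m ≤ n}) (n := 0) (by simp) a)
    (measurableSet_coordSigma (A := {m | n ≤ m}) (n := (n + 1 : ℕ)) (by simp) b) c
  rw [← hstat.measureReal_coord n c, ← hstat.measureReal_coord_pair n 1 c b, pairLaw]
  convert h using 3
  exacts [rfl, rfl, rfl, Set.ext fun _ => and_comm]

lemma IsMarkov.pairLaw_succ [IsFiniteMeasure μ] (hstat : IsStationaryConfig μ)
    (hmarkov : IsMarkov q μ) (n : ℕ) (a b : Fin q) :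
    pairLaw μ (n + 1) a b = ∑ c, pairLaw μ n a c * pairLaw μ 1 c b / siteLaw μ c := by
  rw [pairLaw, measureReal_eq_sum_inter_coord μ (measurableSet_coord_pair _ _ a b) n]
  refine Finset.sum_congr rfl fun c _ => ?_
  rcases eq_or_ne (siteLaw μ c) 0 with hc | hc
  · rw [hc, div_zero]
    refine le_antisymm ?_ measureReal_nonneg
    calc _ ≤ μ.real {x | x n = c} := measureReal_mono Set.inter_subset_right
      _ = 0 := by rw [hstat.measureReal_coord n c, hc]
  · rw [eq_div_iff hc, hmarkov.measureReal_inter_coord_mul_siteLaw hstat]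

lemma IsMarkov.transitionMatrix_succ [IsFiniteMeasure μ] (hstat : IsStationaryConfig μ)
    (hmarkov : IsMarkov q μ) (n : ℕ) :
    transitionMatrix μ (n + 1) = transitionMatrix μ n * transitionMatrix μ 1 := by
  ext a b
  simp only [transitionMatrix, Matrix.mul_apply, Matrix.of_apply,
    hmarkov.pairLaw_succ hstat n a b, Finset.sum_div]
  exact Finset.sum_congr rfl fun c _ => by ring

lemma IsMarkov.transitionMatrix_eq_pow [IsFiniteMeasure μ] (hstat : IsStationaryConfig μ)
    (hmarkov : IsMarkov q μ) (n : ℕ) :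
    transitionMatrix μ (n + 1) = transitionMatrix μ 1 ^ (n + 1) := by
  induction n with
  | zero => rw [pow_one]
  | succ n ih => rw [hmarkov.transitionMatrix_succ hstat, ih, ← pow_succ]

lemma IsColoring.trace_transitionMatrix_one (hcol : IsColoring μ) :
    (transitionMatrix μ 1).trace = 0 := by
  simp [Matrix.trace, transitionMatrix, hcol.pairLaw_one_self]

lemma KDependent.transitionMatrix_eq {k : ℕ} (hstat : IsStationaryConfig μ)
    (hdep : KDependent k μ) {m n : ℕ} (hkm : k < m) (hkn : k < n) :
    transitionMatrix μ m = transitionMatrix μ n := by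
  ext a b
  simp only [transitionMatrix, Matrix.of_apply, hdep.pairLaw_eq_mul hstat hkm,
    hdep.pairLaw_eq_mul hstat hkn]

lemma KDependent.trace_transitionMatrix [IsProbabilityMeasure μ] {k : ℕ}
    (hstat : IsStationaryConfig μ) (hdep : KDependent k μ) {n : ℕ} (hkn : k < n) :
    (transitionMatrix μ n).trace = 1 := by
  simp only [Matrix.trace, Matrix.diag, transitionMatrix, Matrix.of_apply,
    hdep.pairLaw_eq_mul hstat hkn, mul_self_div_self, sum_siteLaw]

end Config

theorem no_markov_stationary_finitely_dependent_coloring_general (q k : ℕ)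
    (μ : Measure (Config q)) [IsProbabilityMeasure μ]
    (hstat : IsStationaryConfig μ) (hcol : IsColoring μ) (hdep : KDependent k μ)
    (hmarkov : IsMarkov q μ) : False := by
  have hpow := hmarkov.transitionMatrix_eq_pow hstat
  have hstable : transitionMatrix μ 1 ^ (k + 1 + 1) = transitionMatrix μ 1 ^ (k + 1) := by
    rw [← hpow, ← hpow, hdep.transitionMatrix_eq hstat (by omega) (Nat.lt_succ_self k)]
  have htrace := Matrix.trace_eq_trace_pow_of_pow_succ_eq hstable
  rw [hcol.trace_transitionMatrix_one, ← hpow, hdep.trace_transitionMatrix hstat k.lt_succ_self]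
    at htrace
  exact zero_ne_one htrace

/-- A stationary finitely dependent coloring of `ℤ` cannot be a Markov chain: no
probability measure on `ℤ → Fin q` is simultaneously stationary, a `q`-coloring,
`k`-dependent and Markov. -/
theorem no_markov_stationary_finitely_dependent_coloring (q k : ℕ) (hq : 1 ≤ q)
    (μ : Measure (Config q)) [IsProbabilityMeasure μ]
    (hstat : IsStationaryConfig μ) (hcol : IsColoring μ) (hdep : KDependent k μ)
    (hmarkov : IsMarkov q μ) : False :=
  no_markov_stationary_finitely_dependent_coloring_general q k μ hstat hcol hdep hmarkov
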